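/- arXiv:2307.07785 — 2 statements merged into one kernel-verified Lean document; each statement's English description precedes it below -/
import Mathlib

section
/- Let Θ ⊂ ℝ^d be compact, let R : Θ → ℝ and f_1,…,f_n : Θ → ℝ^m be continuous, let y_1,…,y_n ∈ ℝ^m, let ℓ : ℝ^m × ℝ^m → [0,∞) be continuous with ℓ(z,z') = 0 if and only if z = z', and suppose M = {θ ∈ Θ : f_i(θ) = y_i for all i} is nonempty. Define the augmented Lagrangian Λ(θ,γ,λ) = R(θ) + (1/γ) Σ_{i=1}^n ℓ(f_i(θ), y_i) + Σ_{i=1}^n λ_i · (f_i(θ) − y_i) for θ ∈ Θ, γ > 0, λ = (λ_i)_{i=1}^n ∈ ℝ^{n×m}, and the dual function Λ*(γ,λ) = inf_{θ ∈ Θ} Λ(θ,γ,λ). Then inf_{θ ∈ M} R(θ) = sup_{λ ∈ ℝ^{n×m}} sup_{γ ∈ (0,∞)} Λ*(γ,λ). -/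
/-!
Weak duality is immediate: at a feasible point the loss and multiplier terms vanish, so every
value of the dual function is at most `R` there. For the reverse inequality the multipliers are
not needed at all: on the compact sublevel set `{θ ∈ Θ | R θ ≤ w}` of a level `w` below the
constrained minimum, the continuous penalty `∑ i, ℓ (f i θ) (y i)` has no zero, hence a positive
lower bound, so a small enough `γ` pushes `R + penalty / γ` above `w` on all of `Θ`.
-/

open Finset Set

theorem IsCompact.exists_pos_forall_le_add_mul {X : Type*} [TopologicalSpace X] {K : Set X}
    (hK : IsCompact K) {R P : X → ℝ} (hR : ContinuousOn R K) (hP : ContinuousOn P K)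
    (hP0 : ∀ θ ∈ K, 0 ≤ P θ) {w : ℝ} (hw : ∀ θ ∈ K, P θ = 0 → w < R θ) :
    ∃ c, 0 < c ∧ ∀ θ ∈ K, w ≤ R θ + c * P θ := by
  have hS : IsCompact (K ∩ R ⁻¹' Iic w) :=
    hR.lowerSemicontinuousOn.isCompact_inter_preimage_Iic hK w
  obtain ⟨p, hp, hpS⟩ := hS.exists_forall_le' (hP.mono inter_subset_left) (a := 0)
    fun θ hθ => (hP0 θ hθ.1).lt_of_ne' fun h => hθ.2.not_gt (hw θ hθ.1 h)
  obtain ⟨B, hB⟩ := hS.bddBelow_image (hR.mono inter_subset_left)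
  refine ⟨(|w - B| + 1) / p, by positivity, fun θ hθ => ?_⟩
  by_cases hθw : R θ ≤ w
  · have hBR : B ≤ R θ := hB (mem_image_of_mem R ⟨hθ, hθw⟩)
    have hpen : |w - B| + 1 ≤ (|w - B| + 1) / p * P θ := by
      rw [div_mul_eq_mul_div, le_div_iff₀ hp]
      gcongr
      exact hpS θ ⟨hθ, hθw⟩
    linarith [le_abs_self (w - B)]
  · have hcP : 0 ≤ (|w - B| + 1) / p * P θ := mul_nonneg (by positivity) (hP0 θ hθ)
    linarith [not_le.1 hθw]

theorem IsCompact.sep_forall_eq {X E ι : Type*} [TopologicalSpace X] [T2Space X]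
    [TopologicalSpace E] [T1Space E] {K : Set X} (hK : IsCompact K) {f : ι → X → E}
    (hf : ∀ i, ContinuousOn (f i) K) (y : ι → E) : IsCompact {θ ∈ K | ∀ i, f i θ = y i} := by
  have hclosed := (continuousOn_pi.2 hf).preimage_isClosed_of_isClosed hK.isClosed
    (isClosed_singleton (x := y))
  refine hK.of_isClosed_subset ?_ (sep_subset _ _)
  convert hclosed using 1
  ext θ
  simp [funext_iff]

section Penalty

variable {X E ι : Type*} [Fintype ι]

def penalty (ℓ : E → E → ℝ) (f : ι → X → E) (y : ι → E) (θ : X) : ℝ :=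
  ∑ i, ℓ (f i θ) (y i)

variable {ℓ : E → E → ℝ} {f : ι → X → E} {y : ι → E}

theorem penalty_nonneg (hℓ : ∀ z z', 0 ≤ ℓ z z') (θ : X) : 0 ≤ penalty ℓ f y θ :=
  sum_nonneg fun _ _ => hℓ _ _

theorem penalty_eq_zero_iff (hℓ : ∀ z z', 0 ≤ ℓ z z') (hℓzero : ∀ z z', ℓ z z' = 0 ↔ z = z')
    {θ : X} : penalty ℓ f y θ = 0 ↔ ∀ i, f i θ = y i := by
  simp [penalty, sum_eq_zero_iff_of_nonneg fun _ _ => hℓ _ _, hℓzero]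

theorem continuousOn_penalty [TopologicalSpace X] [TopologicalSpace E]
    (hℓ : Continuous fun p : E × E => ℓ p.1 p.2) {K : Set X} (hf : ∀ i, ContinuousOn (f i) K) :
    ContinuousOn (penalty ℓ f y) K :=
  continuousOn_finsetSum _ fun i _ => hℓ.comp_continuousOn ((hf i).prodMk continuousOn_const)

end Penalty

section AugmentedLagrangian

variable {X ι κ : Type*} [Fintype ι] [Fintype κ]
  (R : X → ℝ) (ℓ : EuclideanSpace ℝ κ → EuclideanSpace ℝ κ → ℝ)
  (f : ι → X → EuclideanSpace ℝ κ) (y : ι → EuclideanSpace ℝ κ)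

noncomputable def augLagrangian (θ : X) (γ : ℝ) (lam : ι → EuclideanSpace ℝ κ) : ℝ :=
  R θ + (1 / γ) * penalty ℓ f y θ + ∑ i, ∑ j, lam i j * (f i θ j - y i j)

noncomputable def augDual (Θ : Set X) (γ : ℝ) (lam : ι → EuclideanSpace ℝ κ) : ℝ :=
  sInf {r : ℝ | ∃ θ ∈ Θ, r = augLagrangian R ℓ f y θ γ lam}

variable {R ℓ f y}

theorem augLagrangian_of_forall_eq (hℓ : ∀ z, ℓ z z = 0) {θ : X} (hθ : ∀ i, f i θ = y i)
    (γ : ℝ) (lam : ι → EuclideanSpace ℝ κ) : augLagrangian R ℓ f y θ γ lam = R θ := by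
  simp [augLagrangian, penalty, hθ, hℓ]

theorem augLagrangian_zero (θ : X) (γ : ℝ) :
    augLagrangian R ℓ f y θ γ 0 = R θ + γ⁻¹ * penalty ℓ f y θ := by
  simp [augLagrangian]

theorem continuousOn_augLagrangian [TopologicalSpace X] {K : Set X} (hR : ContinuousOn R K)
    (hℓ : Continuous fun p : EuclideanSpace ℝ κ × EuclideanSpace ℝ κ => ℓ p.1 p.2)
    (hf : ∀ i, ContinuousOn (f i) K) (γ : ℝ) (lam : ι → EuclideanSpace ℝ κ) :
    ContinuousOn (fun θ => augLagrangian R ℓ f y θ γ lam) K := by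
  unfold augLagrangian
  refine (hR.add (continuousOn_const.mul (continuousOn_penalty hℓ hf))).add ?_
  refine continuousOn_finsetSum _ fun i _ => continuousOn_finsetSum _ fun j _ => ?_
  exact continuousOn_const.mul
    (((PiLp.continuous_apply 2 _ j).comp_continuousOn (hf i)).sub continuousOn_const)

theorem augDual_le_of_forall_eq [TopologicalSpace X] {Θ : Set X} (hΘ : IsCompact Θ)
    (hR : ContinuousOn R Θ)
    (hℓ : Continuous fun p : EuclideanSpace ℝ κ × EuclideanSpace ℝ κ => ℓ p.1 p.2)
    (hℓzero : ∀ z, ℓ z z = 0) (hf : ∀ i, ContinuousOn (f i) Θ) {θ : X} (hθΘ : θ ∈ Θ)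
    (hθ : ∀ i, f i θ = y i) (γ : ℝ) (lam : ι → EuclideanSpace ℝ κ) :
    augDual R ℓ f y Θ γ lam ≤ R θ := by
  have hbdd := hΘ.bddBelow_image (continuousOn_augLagrangian (y := y) hR hℓ hf γ lam)
  rw [← augLagrangian_of_forall_eq (R := R) hℓzero hθ γ lam]
  refine csInf_le ?_ ⟨θ, hθΘ, rfl⟩
  simpa only [Set.image, eq_comm] using hbdd

theorem exists_le_augDual [TopologicalSpace X] {Θ : Set X} (hΘ : IsCompact Θ)
    (hΘne : Θ.Nonempty) (hR : ContinuousOn R Θ)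
    (hℓ : Continuous fun p : EuclideanSpace ℝ κ × EuclideanSpace ℝ κ => ℓ p.1 p.2)
    (hℓnonneg : ∀ z z', 0 ≤ ℓ z z') (hℓzero : ∀ z z', ℓ z z' = 0 ↔ z = z')
    (hf : ∀ i, ContinuousOn (f i) Θ) {w : ℝ} (hw : ∀ θ ∈ Θ, (∀ i, f i θ = y i) → w < R θ) :
    ∃ γ, 0 < γ ∧ w ≤ augDual R ℓ f y Θ γ 0 := by
  obtain ⟨c, hc, hpen⟩ := hΘ.exists_pos_forall_le_add_mul hR (continuousOn_penalty hℓ hf)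
    (fun θ _ => penalty_nonneg hℓnonneg θ)
    fun θ hθ h0 => hw θ hθ ((penalty_eq_zero_iff hℓnonneg hℓzero).1 h0)
  refine ⟨c⁻¹, inv_pos.2 hc, le_csInf ?_ ?_⟩
  · obtain ⟨θ, hθ⟩ := hΘne
    exact ⟨_, θ, hθ, rfl⟩
  · rintro _ ⟨θ, hθ, rfl⟩
    rw [augLagrangian_zero, inv_inv]
    exact hpen θ hθ

end AugmentedLagrangian

theorem augmented_lagrangian_duality_general
    (d m n : ℕ) (Θ : Set (EuclideanSpace ℝ (Fin d)))
    (hΘcompact : IsCompact Θ)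
    (R : EuclideanSpace ℝ (Fin d) → ℝ) (hRcont : ContinuousOn R Θ)
    (f : Fin n → EuclideanSpace ℝ (Fin d) → EuclideanSpace ℝ (Fin m))
    (hfcont : ∀ i, ContinuousOn (f i) Θ)
    (y : Fin n → EuclideanSpace ℝ (Fin m))
    (ℓ : EuclideanSpace ℝ (Fin m) → EuclideanSpace ℝ (Fin m) → ℝ)
    (hℓcont : Continuous fun p : EuclideanSpace ℝ (Fin m) × EuclideanSpace ℝ (Fin m) => ℓ p.1 p.2)
    (hℓnonneg : ∀ z z', 0 ≤ ℓ z z')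
    (hℓzero : ∀ z z', ℓ z z' = 0 ↔ z = z')
    (M : Set (EuclideanSpace ℝ (Fin d)))
    (hM : M = {θ ∈ Θ | ∀ i, f i θ = y i})
    (hMne : M.Nonempty)
    (Λ : EuclideanSpace ℝ (Fin d) → ℝ → (Fin n → EuclideanSpace ℝ (Fin m)) → ℝ)
    (hΛ : ∀ θ γ lam, Λ θ γ lam =
      R θ + (1 / γ) * ∑ i, ℓ (f i θ) (y i) +
        ∑ i, ∑ j, lam i j * (f i θ j - y i j))
    (Λstar : ℝ → (Fin n → EuclideanSpace ℝ (Fin m)) → ℝ)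
    (hΛstar : ∀ γ lam, Λstar γ lam = sInf {r : ℝ | ∃ θ ∈ Θ, r = Λ θ γ lam}) :
    sInf {r : ℝ | ∃ θ ∈ M, r = R θ} =
      sSup {r : ℝ | ∃ lam : Fin n → EuclideanSpace ℝ (Fin m), ∃ γ : ℝ, 0 < γ ∧
        r = Λstar γ lam} := by
  have hdual : Λstar = augDual R ℓ f y Θ := by
    funext γ lam
    simp only [hΛstar, hΛ]
    rfl
  subst hM hdual
  obtain ⟨θs, hθs, hmin⟩ :=
    (hΘcompact.sep_forall_eq hfcont y).exists_isMinOn hMne (hRcont.mono (sep_subset _ _))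
  have hLHS : IsLeast {r | ∃ θ ∈ {θ ∈ Θ | ∀ i, f i θ = y i}, r = R θ} (R θs) :=
    ⟨⟨θs, hθs, rfl⟩, by rintro _ ⟨θ, hθ, rfl⟩; exact hmin hθ⟩
  rw [hLHS.csInf_eq]
  refine (csSup_eq_of_forall_le_of_forall_lt_exists_gt ?_ ?_ ?_).symm
  · exact ⟨_, 0, 1, one_pos, rfl⟩
  · rintro _ ⟨lam, γ, -, rfl⟩
    exact augDual_le_of_forall_eq hΘcompact hRcont hℓcont (fun z => (hℓzero z z).2 rfl) hfcont
      hθs.1 hθs.2 γ lam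
  · intro w hw
    obtain ⟨γ, hγ, hle⟩ := exists_le_augDual (w := (w + R θs) / 2) hΘcompact ⟨θs, hθs.1⟩ hRcont
      hℓcont hℓnonneg hℓzero hfcont fun θ hθ hfeas => by
        linarith [show R θs ≤ R θ from hmin ⟨hθ, hfeas⟩]
    exact ⟨_, ⟨0, γ, hγ, rfl⟩, by linarith⟩

/-- Augmented Lagrangian (zero-duality-gap) duality for the constrained
interpolation problem: minimize `R(θ)` over `θ ∈ Θ` subject to `f i θ = y i` for all `i`,
with the loss `ℓ` used as augmenting function. -/
theorem augmented_lagrangian_duality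
    (d m n : ℕ) (Θ : Set (EuclideanSpace ℝ (Fin d)))
    (hΘcompact : IsCompact Θ) (hΘne : Θ.Nonempty)
    (R : EuclideanSpace ℝ (Fin d) → ℝ) (hRcont : ContinuousOn R Θ)
    (f : Fin n → EuclideanSpace ℝ (Fin d) → EuclideanSpace ℝ (Fin m))
    (hfcont : ∀ i, ContinuousOn (f i) Θ)
    (y : Fin n → EuclideanSpace ℝ (Fin m))
    (ℓ : EuclideanSpace ℝ (Fin m) → EuclideanSpace ℝ (Fin m) → ℝ)
    (hℓcont : Continuous fun p : EuclideanSpace ℝ (Fin m) × EuclideanSpace ℝ (Fin m) => ℓ p.1 p.2)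
    (hℓnonneg : ∀ z z', 0 ≤ ℓ z z')
    (hℓzero : ∀ z z', ℓ z z' = 0 ↔ z = z')
    (M : Set (EuclideanSpace ℝ (Fin d)))
    (hM : M = {θ ∈ Θ | ∀ i, f i θ = y i})
    (hMne : M.Nonempty)
    (Λ : EuclideanSpace ℝ (Fin d) → ℝ → (Fin n → EuclideanSpace ℝ (Fin m)) → ℝ)
    (hΛ : ∀ θ γ lam, Λ θ γ lam =
      R θ + (1 / γ) * ∑ i, ℓ (f i θ) (y i) +
        ∑ i, ∑ j, lam i j * (f i θ j - y i j))
    (Λstar : ℝ → (Fin n → EuclideanSpace ℝ (Fin m)) → ℝ)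
    (hΛstar : ∀ γ lam, Λstar γ lam = sInf {r : ℝ | ∃ θ ∈ Θ, r = Λ θ γ lam}) :
    sInf {r : ℝ | ∃ θ ∈ M, r = R θ} =
      sSup {r : ℝ | ∃ lam : Fin n → EuclideanSpace ℝ (Fin m), ∃ γ : ℝ, 0 < γ ∧
        r = Λstar γ lam} :=
  augmented_lagrangian_duality_general d m n Θ hΘcompact R hRcont f hfcont y ℓ hℓcont hℓnonneg
    hℓzero M hM hMne Λ hΛ Λstar hΛstar
end

section
/- Let π be a continuous probability density on ℝ^d with a unique global maximizer θ₀, with π(θ) → 0 as ‖θ‖ → ∞, and such that −log π(θ) ≤ M‖θ‖^p for all θ ∈ ℝ^d, for some constants M, p > 0. For τ ∈ (0,1] let π_τ(θ) = π(θ)^{1/τ} / ∫_{ℝ^d} π(θ')^{1/τ} dθ'. Then there exist a compact set K ⊂ ℝ^d containing θ₀ and a function r : (0,1] → [0,∞) such that r(τ)/τ^k → 0 as τ → 0⁺ for every k ∈ ℕ, and π_τ(θ) ≤ r(τ) π(θ) for all θ ∉ K and all τ ∈ (0,1]. -/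
/-!
Let `B = π θ₀` and `K = {π ≥ B/2}`, which is compact because `π` vanishes at infinity.
On a neighbourhood `U` of the mode, of Lebesgue measure `V > 0`, we have `π > 3B/4`, so the
normalising constant satisfies `∫ π^{1/τ} ≥ V (3B/4)^{1/τ}`. Off `K`,
`π^{1/τ} ≤ (B/2)^{1/τ - 1} π`, hence `π_τ ≤ (2/3)^{1/τ} π / (V B/2)`, and `(2/3)^{1/τ}`
decays faster than any power of `τ`.
-/

open MeasureTheory Filter Topology

lemma tendsto_rpow_one_div_div_pow_nhdsGT_zero {q : ℝ} (hq0 : 0 < q) (hq1 : q < 1) (k : ℕ) :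
    Tendsto (fun τ : ℝ => q ^ (1 / τ) / τ ^ k) (𝓝[>] 0) (𝓝 0) := by
  have hb : 0 < -Real.log q := neg_pos.2 (Real.log_neg hq0 hq1)
  have hx : Tendsto (fun x : ℝ => x ^ (k : ℝ) * q ^ x) atTop (𝓝 0) := by
    refine (tendsto_rpow_mul_exp_neg_mul_atTop_nhds_zero k _ hb).congr fun x => ?_
    rw [Real.rpow_def_of_pos hq0, neg_neg]
  refine (hx.comp tendsto_inv_nhdsGT_zero).congr' ?_
  filter_upwards [self_mem_nhdsWithin] with τ (hτ : 0 < τ)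
  simp only [Function.comp_apply, Real.rpow_natCast, inv_pow, one_div]
  ring

lemma Real.rpow_le_rpow_sub_one_mul {x c t : ℝ} (hx : 0 ≤ x) (hxc : x ≤ c) (ht : 1 ≤ t) :
    x ^ t ≤ c ^ (t - 1) * x := by
  calc x ^ t = x ^ (t - 1) * x := by
        rw [← Real.rpow_add_one' hx (by linarith), sub_add_cancel]
    _ ≤ c ^ (t - 1) * x := by gcongr

lemma isCompact_setOf_le_of_tendsto_cocompact {X : Type*} [TopologicalSpace X] {f : X → ℝ}
    (hf : Continuous f) (hdecay : Tendsto f (cocompact X) (𝓝 0)) {c : ℝ} (hc : 0 < c) :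
    IsCompact {x | c ≤ f x} := by
  obtain ⟨t, ht, hsub⟩ := mem_cocompact'.1 (hdecay.eventually (eventually_lt_nhds hc))
  exact ht.of_isClosed_subset (isClosed_le continuous_const hf)
    fun x (hx : c ≤ f x) => hsub (not_lt.2 hx)

lemma rpow_div_le_rpow_div_mul {a Z c c' V t : ℝ} (ha : 0 ≤ a) (hac : a ≤ c) (hc : 0 < c)
    (hc' : 0 < c') (hV : 0 < V) (ht : 1 ≤ t) (hZ : V * c' ^ t ≤ Z) :
    a ^ t / Z ≤ (c / c') ^ t / (c * V) * a := by
  have hVc' : 0 < V * c' ^ t := by positivity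
  calc a ^ t / Z ≤ c ^ (t - 1) * a / (V * c' ^ t) := by
        gcongr
        exact Real.rpow_le_rpow_sub_one_mul ha hac ht
    _ = (c / c') ^ t / (c * V) * a := by
        rw [Real.div_rpow hc.le hc'.le, Real.rpow_sub_one hc.ne']
        field_simp

section

variable {X : Type*} [MeasurableSpace X] {μ : Measure X} {f : X → ℝ}

lemma MeasureTheory.Integrable.rpow_of_le {B t : ℝ} (hf : Integrable f μ) (hf0 : ∀ x, 0 ≤ f x)
    (hfB : ∀ x, f x ≤ B) (ht : 1 ≤ t) : Integrable (fun x => f x ^ t) μ := by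
  refine (hf.const_mul (B ^ (t - 1))).mono
    (hf.aemeasurable.pow_const t).aestronglyMeasurable (Eventually.of_forall fun x => ?_)
  rw [Real.norm_of_nonneg (Real.rpow_nonneg (hf0 x) t), Real.norm_of_nonneg
    (mul_nonneg (Real.rpow_nonneg ((hf0 x).trans (hfB x)) _) (hf0 x))]
  exact Real.rpow_le_rpow_sub_one_mul (hf0 x) (hfB x) ht

lemma exists_pos_mul_rpow_le_integral_rpow [TopologicalSpace X] [OpensMeasurableSpace X]
    [μ.IsOpenPosMeasure] [IsLocallyFiniteMeasure μ] (hf : Continuous f) (hf0 : ∀ x, 0 ≤ f x)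
    {x₀ : X} {c : ℝ} (hc : 0 ≤ c) (hcx₀ : c < f x₀) :
    ∃ V > 0, ∀ t : ℝ, 0 ≤ t → Integrable (fun x => f x ^ t) μ → V * c ^ t ≤ ∫ x, f x ^ t ∂μ := by
  obtain ⟨s, hs, hμs⟩ := μ.finiteAt_nhds x₀
  set U := interior s ∩ {x | c < f x}
  have hU : IsOpen U := isOpen_interior.inter (isOpen_lt continuous_const hf)
  have hUfin : μ U ≠ ⊤ := (measure_mono (interior_subset.trans' Set.inter_subset_left)
    |>.trans_lt hμs).ne
  refine ⟨μ.real U, ENNReal.toReal_pos (hU.measure_pos μ ⟨x₀, mem_interior_iff_mem_nhds.2 hs,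
    hcx₀⟩).ne' hUfin, fun t ht hint => ?_⟩
  calc μ.real U * c ^ t = c ^ t * μ.real U := mul_comm _ _
    _ ≤ ∫ x in U, f x ^ t ∂μ := setIntegral_ge_of_const_le_real hU.measurableSet hUfin
        (fun x hx => Real.rpow_le_rpow hc hx.2.le ht) hint.integrableOn
    _ ≤ ∫ x, f x ^ t ∂μ :=
        setIntegral_le_integral hint (Eventually.of_forall fun x => Real.rpow_nonneg (hf0 x) t)

end

theorem tempered_prior_concentration_general
    (d : ℕ) (π : EuclideanSpace ℝ (Fin d) → ℝ)
    (hπcont : Continuous π) (hπnonneg : ∀ θ, 0 ≤ π θ)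
    (hπprob : ∫ θ, π θ = 1)
    (θ0 : EuclideanSpace ℝ (Fin d))
    (hmode : ∀ θ, θ ≠ θ0 → π θ < π θ0)
    (hdecay : Tendsto π (cocompact (EuclideanSpace ℝ (Fin d))) (nhds 0))
    (πτ : ℝ → EuclideanSpace ℝ (Fin d) → ℝ)
    (hπτ : ∀ τ θ, πτ τ θ = π θ ^ (1 / τ) / ∫ θ', π θ' ^ (1 / τ)) :
    ∃ K : Set (EuclideanSpace ℝ (Fin d)), IsCompact K ∧ θ0 ∈ K ∧
      ∃ r : ℝ → ℝ, (∀ τ ∈ Set.Ioc (0 : ℝ) 1, 0 ≤ r τ) ∧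
        (∀ k : ℕ, Tendsto (fun τ => r τ / τ ^ k) (nhdsWithin 0 (Set.Ioi 0)) (nhds 0)) ∧
        ∀ θ ∉ K, ∀ τ ∈ Set.Ioc (0 : ℝ) 1, πτ τ θ ≤ r τ * π θ := by
  have hle : ∀ θ, π θ ≤ π θ0 := fun θ => by
    rcases eq_or_ne θ θ0 with rfl | h
    exacts [le_rfl, (hmode θ h).le]
  have hB : 0 < π θ0 := by
    by_contra! h
    have : π = 0 := funext fun θ => le_antisymm ((hle θ).trans h) (hπnonneg θ)
    simp [this] at hπprob
  have hint : Integrable π := Integrable.of_integral_ne_zero (by simp [hπprob])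
  set c := π θ0 / 2 with hc
  set c' := 3 * π θ0 / 4 with hc'
  obtain ⟨V, hV, hZ⟩ := exists_pos_mul_rpow_le_integral_rpow (μ := volume) (x₀ := θ0) (c := c')
    hπcont hπnonneg (by positivity) (by rw [hc']; linarith)
  refine ⟨{θ | c ≤ π θ}, isCompact_setOf_le_of_tendsto_cocompact hπcont hdecay (by positivity),
    show c ≤ π θ0 by rw [hc]; linarith, fun τ => (c / c') ^ (1 / τ) / (c * V),
    fun τ _ => by positivity, fun k => ?_, fun θ hθ τ ⟨hτ0, hτ1⟩ => ?_⟩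
  · simpa only [zero_div, div_right_comm] using
      (tendsto_rpow_one_div_div_pow_nhdsGT_zero (q := c / c') (by positivity)
        ((div_lt_one (by positivity)).2 (by rw [hc, hc']; linarith)) k).div_const (c * V)
  · have ht : 1 ≤ 1 / τ := one_le_one_div hτ0 hτ1
    rw [hπτ]
    exact rpow_div_le_rpow_div_mul (hπnonneg θ) (not_le.1 hθ).le (by positivity) (by positivity) hV
      ht (hZ _ (by linarith) (hint.rpow_of_le hπnonneg hle ht))

/-- Super-polynomial concentration of the tempered prior family
`π_τ ∝ π^{1/τ}` onto a compact neighborhood of its mode as `τ → 0⁺`. -/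
theorem tempered_prior_concentration
    (d : ℕ) (π : EuclideanSpace ℝ (Fin d) → ℝ)
    (hπcont : Continuous π) (hπnonneg : ∀ θ, 0 ≤ π θ)
    (hπprob : ∫ θ, π θ = 1)
    (θ0 : EuclideanSpace ℝ (Fin d))
    (hmode : ∀ θ, θ ≠ θ0 → π θ < π θ0)
    (hdecay : Tendsto π (cocompact (EuclideanSpace ℝ (Fin d))) (nhds 0))
    (M p : ℝ) (hMpos : 0 < M) (hppos : 0 < p)
    (hlower : ∀ θ, Real.exp (-(M * ‖θ‖ ^ p)) ≤ π θ)
    (πτ : ℝ → EuclideanSpace ℝ (Fin d) → ℝ)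
    (hπτ : ∀ τ θ, πτ τ θ = π θ ^ (1 / τ) / ∫ θ', π θ' ^ (1 / τ)) :
    ∃ K : Set (EuclideanSpace ℝ (Fin d)), IsCompact K ∧ θ0 ∈ K ∧
      ∃ r : ℝ → ℝ, (∀ τ ∈ Set.Ioc (0 : ℝ) 1, 0 ≤ r τ) ∧
        (∀ k : ℕ, Tendsto (fun τ => r τ / τ ^ k) (nhdsWithin 0 (Set.Ioi 0)) (nhds 0)) ∧
        ∀ θ ∉ K, ∀ τ ∈ Set.Ioc (0 : ℝ) 1, πτ τ θ ≤ r τ * π θ :=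
  tempered_prior_concentration_general d π hπcont hπnonneg hπprob θ0 hmode hdecay πτ hπτ
end
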